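/- Let G = (V,E) be a finite simple graph with minimum degree at least 1, and let k and h be integers with 2 ≤ k ≤ |V| and h ≥ 2. Let G' be the graph with vertex set V ∪ E ∪ F where |F| = h, in which v ∈ V and e ∈ E are adjacent iff v is an endpoint of e, and every f ∈ F is adjacent to every e ∈ E; let thr'(v) = 1 for v ∈ V, thr'(e) = 2 for e ∈ E, and thr'(f) = 1 for f ∈ F. Then G has an independent set of size k if and only if there exists a set S ⊆ V ∪ E ∪ F with |S| = k and act_{G'}(S) ≠ V ∪ E ∪ F. -/
import Mathlib


/-- One round of the activation process: a vertex becomes active if at least `thr v`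
of its neighbors are active. -/
def actStep {V : Type*} (G : SimpleGraph V) (thr : V → ℕ) (S : Set V) : Set V :=
  S ∪ {v | thr v ≤ (G.neighborSet v ∩ S).ncard}

/-- `actIter G thr i S` is the set of vertices active after `i` rounds starting from `S`. -/
def actIter {V : Type*} (G : SimpleGraph V) (thr : V → ℕ) : ℕ → Set V → Set V
  | 0, S => S
  | i + 1, S => actStep G thr (actIter G thr i S)

/-- The set of vertices eventually activated by `S`. -/
def act {V : Type*} (G : SimpleGraph V) (thr : V → ℕ) (S : Set V) : Set V :=
  ⋃ i, actIter G thr i S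

/-- `S` is a target set if it eventually activates every vertex. -/
def IsTargetSet {V : Type*} (G : SimpleGraph V) (thr : V → ℕ) (S : Set V) : Prop :=
  act G thr S = Set.univ

/-- The graph on `V ∪ E ∪ F` (with `|F| = h`): a vertex `v` is adjacent to an edge `e` iff
`v` is an endpoint of `e`, and every `f ∈ F` is adjacent to every edge `e ∈ E`. -/
def augGraph {V : Type*} (G : SimpleGraph V) (h : ℕ) :
    SimpleGraph (V ⊕ (G.edgeSet ⊕ Fin h)) :=
  SimpleGraph.fromRel fun x y =>
    (∃ (v : V) (e : G.edgeSet), x = Sum.inl v ∧ y = Sum.inr (Sum.inl e) ∧ v ∈ (e : Sym2 V)) ∨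
    (∃ (e : G.edgeSet) (f : Fin h), x = Sum.inr (Sum.inl e) ∧ y = Sum.inr (Sum.inr f))

/-- Thresholds `1` on `V`, `2` on `E`, `1` on `F`. -/
def augThr {V : Type*} (G : SimpleGraph V) (h : ℕ) : V ⊕ (G.edgeSet ⊕ Fin h) → ℕ :=
  Sum.elim (fun _ => 1) (Sum.elim (fun _ => 2) (fun _ => 1))

section Helpers
variable {V : Type*} {G : SimpleGraph V} {thr : V → ℕ} {S : Set V}

lemma mem_act_iff {x : V} : x ∈ act G thr S ↔ ∃ i, x ∈ actIter G thr i S := Set.mem_iUnion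

lemma subset_act : S ⊆ act G thr S := fun x hx => mem_act_iff.2 ⟨0, hx⟩

lemma step_mem {w : V} {i : ℕ} (hw : thr w ≤ (G.neighborSet w ∩ actIter G thr i S).ncard) :
    w ∈ actIter G thr (i+1) S := Or.inr hw

lemma iter_fixed (hfix : actStep G thr S ⊆ S) : ∀ i, actIter G thr i S = S := by
  intro i
  induction i with
  | zero => rfl
  | succ i ih =>
    show actStep G thr (actIter G thr i S) = S
    rw [ih]
    exact le_antisymm hfix Set.subset_union_left

lemma act_fixed (hfix : actStep G thr S ⊆ S) : act G thr S = S := by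
  ext x
  simp only [mem_act_iff]
  constructor
  · rintro ⟨i, hi⟩; rwa [iter_fixed hfix i] at hi
  · exact fun hx => ⟨0, hx⟩

variable {h : ℕ}

lemma nbhd_inl (v : V) : (augGraph G h).neighborSet (Sum.inl v) =
    {w | ∃ e : G.edgeSet, w = Sum.inr (Sum.inl e) ∧ v ∈ (e : Sym2 V)} := by
  ext w
  simp only [SimpleGraph.mem_neighborSet, augGraph, SimpleGraph.fromRel_adj, Set.mem_setOf_eq]
  constructor
  · rintro ⟨hne, (⟨v', e, hv, he, hm⟩ | ⟨e, f, hx, hy⟩) | (⟨v', e, hv, he, hm⟩ | ⟨e, f, hx, hy⟩)⟩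
    · cases hv; exact ⟨e, he, hm⟩
    · exact absurd hx (by simp)
    · exact absurd he (by simp)
    · exact absurd hy (by simp)
  · rintro ⟨e, rfl, hm⟩
    exact ⟨by simp, Or.inl (Or.inl ⟨v, e, rfl, rfl, hm⟩)⟩

lemma nbhd_edge (e : G.edgeSet) : (augGraph G h).neighborSet (Sum.inr (Sum.inl e)) =
    {w | (∃ v : V, w = Sum.inl v ∧ v ∈ (e : Sym2 V)) ∨ (∃ f : Fin h, w = Sum.inr (Sum.inr f))} := by
  ext w
  simp only [SimpleGraph.mem_neighborSet, augGraph, SimpleGraph.fromRel_adj, Set.mem_setOf_eq]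
  constructor
  · rintro ⟨hne, (⟨v', e', hv, he, hm⟩ | ⟨e', f, hx, hy⟩) | (⟨v', e', hv, he, hm⟩ | ⟨e', f, hx, hy⟩)⟩
    · exact absurd hv (by simp)
    · cases hx; exact Or.inr ⟨f, hy⟩
    · cases he; exact Or.inl ⟨v', hv, hm⟩
    · exact absurd hy (by simp)
  · rintro (⟨v, rfl, hm⟩ | ⟨f, rfl⟩)
    · exact ⟨by simp, Or.inr (Or.inl ⟨v, e, rfl, rfl, hm⟩)⟩
    · exact ⟨by simp, Or.inl (Or.inr ⟨e, f, rfl, rfl⟩)⟩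

lemma nbhd_f (f : Fin h) : (augGraph G h).neighborSet (Sum.inr (Sum.inr f)) =
    {w | ∃ e : G.edgeSet, w = Sum.inr (Sum.inl e)} := by
  ext w
  simp only [SimpleGraph.mem_neighborSet, augGraph, SimpleGraph.fromRel_adj, Set.mem_setOf_eq]
  constructor
  · rintro ⟨hne, (⟨v', e', hv, he, hm⟩ | ⟨e', f', hx, hy⟩) | (⟨v', e', hv, he, hm⟩ | ⟨e', f', hx, hy⟩)⟩
    · exact absurd hv (by simp)
    · exact absurd hx (by simp)
    · exact absurd he (by simp)
    · cases hx; exact ⟨e', rfl⟩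
  · rintro ⟨e, rfl⟩
    exact ⟨by simp, Or.inr (Or.inr ⟨e, f, rfl, rfl⟩)⟩

section Main
variable {n : ℕ} {G : SimpleGraph (Fin n)} {h : ℕ} {S : Set (Fin n ⊕ (G.edgeSet ⊕ Fin h))}

lemma blowup (hh : 2 ≤ h) (hdeg : ∀ v, 1 ≤ (G.neighborSet v).ncard)
    {e0 : G.edgeSet} {i : ℕ}
    (he0 : Sum.inr (Sum.inl e0) ∈ actIter (augGraph G h) (augThr G h) i S) :
    act (augGraph G h) (augThr G h) S = Set.univ := by
  have hF : ∀ f : Fin h, Sum.inr (Sum.inr f) ∈ actIter (augGraph G h) (augThr G h) (i+1) S := by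
    intro f
    apply step_mem
    show 1 ≤ _
    rw [Nat.succ_le_iff, Set.ncard_pos (Set.toFinite _)]
    exact ⟨Sum.inr (Sum.inl e0), ⟨by rw [nbhd_f]; exact ⟨e0, rfl⟩, he0⟩⟩
  have hE : ∀ e : G.edgeSet, Sum.inr (Sum.inl e) ∈ actIter (augGraph G h) (augThr G h) (i+2) S := by
    intro e
    apply step_mem
    show 2 ≤ _
    rw [show (2:ℕ) = 1 + 1 from rfl, Nat.add_one_le_iff,
      Set.one_lt_ncard_iff (Set.toFinite _)]
    refine ⟨Sum.inr (Sum.inr ⟨0, by omega⟩), Sum.inr (Sum.inr ⟨1, by omega⟩),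
      ⟨by rw [nbhd_edge]; exact Or.inr ⟨_, rfl⟩, hF _⟩,
      ⟨by rw [nbhd_edge]; exact Or.inr ⟨_, rfl⟩, hF _⟩, by simp⟩
  have hV : ∀ v : Fin n, Sum.inl v ∈ actIter (augGraph G h) (augThr G h) (i+3) S := by
    intro v
    apply step_mem
    show 1 ≤ _
    rw [Nat.succ_le_iff, Set.ncard_pos (Set.toFinite _)]
    obtain ⟨u, hu⟩ := (Set.ncard_pos (Set.toFinite _)).1 (hdeg v)
    have hadj : G.Adj v u := hu
    refine ⟨Sum.inr (Sum.inl ⟨s(v,u), hadj⟩), ⟨?_, hE _⟩⟩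
    rw [nbhd_inl]
    exact ⟨_, rfl, Sym2.mem_mk_left v u⟩
  ext x
  simp only [Set.mem_univ, iff_true]
  rcases x with v | e | f
  · exact mem_act_iff.2 ⟨i+3, hV v⟩
  · exact mem_act_iff.2 ⟨i+2, hE e⟩
  · exact mem_act_iff.2 ⟨i+1, hF f⟩
end Main

lemma not_thr_le_of_not_step {V : Type*} {G : SimpleGraph V} {thr : V → ℕ} {S : Set V}
    {w : V} {i : ℕ} (hw : w ∉ actIter G thr (i+1) S) :
    ¬ thr w ≤ (G.neighborSet w ∩ actIter G thr i S).ncard :=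
  fun hle => hw (step_mem hle)

end Helpers

/-- Let `G` have minimum degree at least 1, let `2 ≤ k ≤ |V|` and `h ≥ 2`. Then
`G` has an independent set of size `k` iff in the graph on `V ∪ E ∪ F` (with `|F| = h`) and
thresholds `1/2/1` there is a set `S` of exactly `k` vertices not activating everything. -/
theorem stmt16 (n k h : ℕ) (G : SimpleGraph (Fin n))
    (hdeg : ∀ v, 1 ≤ (G.neighborSet v).ncard)
    (hk2 : 2 ≤ k) (hkn : k ≤ n) (hh : 2 ≤ h) :
    (∃ A : Set (Fin n), A.ncard = k ∧ A.Pairwise fun u v => ¬ G.Adj u v) ↔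
      ∃ S : Set (Fin n ⊕ (G.edgeSet ⊕ Fin h)), S.ncard = k ∧
        act (augGraph G h) (augThr G h) S ≠ Set.univ := by
  constructor
  · rintro ⟨A, hAcard, hAind⟩
    refine ⟨Sum.inl '' A, by rw [Set.ncard_image_of_injective _ Sum.inl_injective, hAcard], ?_⟩
    have hfix : actStep (augGraph G h) (augThr G h) (Sum.inl '' A) ⊆ Sum.inl '' A := by
      rintro x (hx | hx)
      · exact hx
      · exfalso
        rcases x with v | e | f
        · have : (augGraph G h).neighborSet (Sum.inl v) ∩ (Sum.inl '' A) = ∅ := by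
            ext w
            simp only [Set.mem_inter_iff, Set.mem_empty_iff_false, iff_false, not_and, nbhd_inl]
            rintro ⟨e, rfl, -⟩ ⟨a, -, hcon⟩
            simp at hcon
          rw [Set.mem_setOf_eq, this, Set.ncard_empty] at hx
          simp [augThr] at hx
        · rw [Set.mem_setOf_eq] at hx
          have h2 : (1:ℕ) < _ := lt_of_lt_of_le one_lt_two hx
          rw [Set.one_lt_ncard_iff (Set.toFinite _)] at h2
          obtain ⟨x, y, ⟨hxN, hxS⟩, ⟨hyN, hyS⟩, hxy⟩ := h2
          obtain ⟨a, haA, rfl⟩ := hxS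
          obtain ⟨b, hbB, rfl⟩ := hyS
          rw [nbhd_edge] at hxN hyN
          have ha : a ∈ (e : Sym2 (Fin n)) := by
            rcases hxN with ⟨v, hv, hm⟩ | ⟨f, hf⟩
            · cases hv; exact hm
            · exact absurd hf (by simp)
          have hb : b ∈ (e : Sym2 (Fin n)) := by
            rcases hyN with ⟨v, hv, hm⟩ | ⟨f, hf⟩
            · cases hv; exact hm
            · exact absurd hf (by simp)
          have hab : a ≠ b := fun hcon => hxy (by rw [hcon])
          have hee : (e : Sym2 (Fin n)) = s(a, b) := (Sym2.mem_and_mem_iff hab).1 ⟨ha, hb⟩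
          have hadj : G.Adj a b := by
            have := e.prop
            rw [hee, SimpleGraph.mem_edgeSet] at this
            exact this
          exact hAind haA hbB hab hadj
        · have : (augGraph G h).neighborSet (Sum.inr (Sum.inr f)) ∩ (Sum.inl '' A) = ∅ := by
            ext w
            simp only [Set.mem_inter_iff, Set.mem_empty_iff_false, iff_false, not_and, nbhd_f]
            rintro ⟨e, rfl⟩ ⟨a, -, hcon⟩
            simp at hcon
          rw [Set.mem_setOf_eq, this, Set.ncard_empty] at hx
          simp [augThr] at hx
    rw [act_fixed hfix]
    intro hcon
    have : Sum.inr (Sum.inr (⟨0, by omega⟩ : Fin h)) ∈ Sum.inl '' A := hcon ▸ Set.mem_univ _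
    obtain ⟨a, -, hcon2⟩ := this
    simp at hcon2
  · rintro ⟨S, hScard, hSne⟩
    -- no edge is ever activated
    have hnoE : ∀ (e : G.edgeSet) (i : ℕ),
        Sum.inr (Sum.inl e) ∉ actIter (augGraph G h) (augThr G h) i S := by
      intro e i hmem
      exact hSne (blowup hh hdeg hmem)
    have hstep1 : ∀ e : G.edgeSet,
        ((augGraph G h).neighborSet (Sum.inr (Sum.inl e)) ∩ S).ncard ≤ 1 := by
      intro e
      have := not_thr_le_of_not_step (hnoE e 1)
      simp only [augThr, actIter, Sum.elim_inr, Sum.elim_inl, not_le] at this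
      omega
    -- an edge exists
    have hn2 : 0 < n := by omega
    obtain ⟨u0, hu0⟩ := (Set.ncard_pos (Set.toFinite _)).1 (hdeg ⟨0, hn2⟩)
    set e0 : G.edgeSet := ⟨s((⟨0, hn2⟩ : Fin n), u0), hu0⟩ with he0def
    -- no F-vertex is in S
    have hnoF : ∀ f : Fin h, Sum.inr (Sum.inr f) ∉ S := by
      intro f0 hf0
      -- no V-vertex in S
      have hnoV : ∀ v : Fin n, Sum.inl v ∉ S := by
        intro v hv
        obtain ⟨u, hu⟩ := (Set.ncard_pos (Set.toFinite _)).1 (hdeg v)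
        have hadj : G.Adj v u := hu
        have h2 : 1 < ((augGraph G h).neighborSet (Sum.inr (Sum.inl ⟨s(v,u), hadj⟩)) ∩ S).ncard := by
          rw [Set.one_lt_ncard_iff (Set.toFinite _)]
          exact ⟨Sum.inl v, Sum.inr (Sum.inr f0),
            ⟨by rw [nbhd_edge]; exact Or.inl ⟨v, rfl, Sym2.mem_mk_left v u⟩, hv⟩,
            ⟨by rw [nbhd_edge]; exact Or.inr ⟨f0, rfl⟩, hf0⟩, by simp⟩
        have := hstep1 ⟨s(v,u), hadj⟩
        omega
      -- no other F-vertex in S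
      have hnoF' : ∀ f : Fin h, f ≠ f0 → Sum.inr (Sum.inr f) ∉ S := by
        intro f hne hf
        have h2 : 1 < ((augGraph G h).neighborSet (Sum.inr (Sum.inl e0)) ∩ S).ncard := by
          rw [Set.one_lt_ncard_iff (Set.toFinite _)]
          exact ⟨Sum.inr (Sum.inr f), Sum.inr (Sum.inr f0),
            ⟨by rw [nbhd_edge]; exact Or.inr ⟨f, rfl⟩, hf⟩,
            ⟨by rw [nbhd_edge]; exact Or.inr ⟨f0, rfl⟩, hf0⟩, by simp [hne]⟩
        have := hstep1 e0
        omega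
      have hsub : S ⊆ {Sum.inr (Sum.inr f0)} := by
        rintro (v | e | f) hx
        · exact absurd hx (hnoV v)
        · exact absurd hx (hnoE e 0)
        · by_cases hfe : f = f0
          · subst hfe; rfl
          · exact absurd hx (hnoF' f hfe)
      have := Set.ncard_le_ncard hsub (Set.toFinite _)
      rw [hScard, Set.ncard_singleton] at this
      omega
    -- hence S consists only of V-vertices
    have hSrange : S ⊆ Set.range Sum.inl := by
      rintro (v | e | f) hx
      · exact ⟨v, rfl⟩
      · exact absurd hx (hnoE e 0)
      · exact absurd hx (hnoF f)
    refine ⟨Sum.inl ⁻¹' S, ?_, ?_⟩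
    · rw [← hScard, ← Set.image_preimage_eq_iff.2 hSrange,
        Set.ncard_image_of_injective _ Sum.inl_injective, Set.preimage_image_eq _ Sum.inl_injective]
    · intro a haA b hbB hab hadj
      have h2 : 1 < ((augGraph G h).neighborSet (Sum.inr (Sum.inl ⟨s(a,b), hadj⟩)) ∩ S).ncard := by
        rw [Set.one_lt_ncard_iff (Set.toFinite _)]
        exact ⟨Sum.inl a, Sum.inl b,
          ⟨by rw [nbhd_edge]; exact Or.inl ⟨a, rfl, Sym2.mem_mk_left a b⟩, haA⟩,
          ⟨by rw [nbhd_edge]; exact Or.inl ⟨b, rfl, Sym2.mem_mk_right a b⟩, hbB⟩,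
          by simpa using hab⟩
      have := hstep1 ⟨s(a,b), hadj⟩
      omega
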